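/- arXiv:1401.7523 — 3 statements merged into one kernel-verified Lean document; each statement's English description precedes it below -/
import Mathlib

section
/- Let Θ = (θ_{ij}) be a 3×3 real symmetric positive definite matrix with inverse (θ^{ij}). Then θ_{12}θ^{12} + θ_{13}θ^{13} ≤ 0, with equality if and only if θ_{12} = θ_{13} = 0. -/
/-!
Since `Θ⁻¹` is symmetric, row `0` of `Θ * Θ⁻¹ = 1` reads
`θ₁₁ θ^{11} + (θ₁₂ θ^{12} + θ₁₃ θ^{13}) = 1`, so the claim is the general fact that a positive
definite `A` has `aᵢᵢ (A⁻¹)ᵢᵢ ≥ 1`, with equality iff row `i` of `A` is zero off the diagonal.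
For `z = aᵢᵢ A⁻¹ eᵢ - eᵢ` one computes `zᵀ A z = aᵢᵢ (aᵢᵢ (A⁻¹)ᵢᵢ - 1)`, which is `≥ 0` and
vanishes iff `z = 0`, i.e. iff `A eᵢ = aᵢᵢ eᵢ`.
-/

namespace Matrix

variable {n : Type*} {A : Matrix n n ℝ}

theorem PosDef.isSymm (hA : A.PosDef) : A.IsSymm :=
  isHermitian_iff_isSymm.mp hA.isHermitian

variable [Fintype n]

theorem PosDef.dotProduct_mulVec_eq_zero_iff (hA : A.PosDef) {x : n → ℝ} :
    x ⬝ᵥ A *ᵥ x = 0 ↔ x = 0 := by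
  refine ⟨fun h ↦ ?_, fun h ↦ by simp [h]⟩
  by_contra hx
  simpa [h] using hA.dotProduct_mulVec_pos hx

variable [DecidableEq n]

theorem mulVec_inv_col_smul_sub_single (hdet : IsUnit A.det) (i : n) :
    A *ᵥ (A i i • A⁻¹.col i - Pi.single i 1) = A i i • Pi.single i 1 - A.col i := by
  rw [mulVec_sub, mulVec_smul, ← mulVec_single_one A⁻¹, mulVec_mulVec, mul_nonsing_inv A hdet,
    one_mulVec, mulVec_single_one]

theorem IsSymm.dotProduct_mulVec_inv_col_smul_sub_single (hA : A.IsSymm) (hdet : IsUnit A.det)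
    (i : n) :
    let z := A i i • A⁻¹.col i - Pi.single i 1
    z ⬝ᵥ A *ᵥ z = A i i * (A i i * A⁻¹ i i - 1) := by
  intro z
  have hcol : A⁻¹.col i ⬝ᵥ A.col i = 1 := by
    rw [← mulVec_single_one A, dotProduct_mulVec, ← mulVec_transpose, hA.eq, ← mulVec_single_one,
      mulVec_mulVec, mul_nonsing_inv A hdet, one_mulVec]
    simp
  rw [mulVec_inv_col_smul_sub_single hdet]
  simp only [z, sub_dotProduct, dotProduct_sub, smul_dotProduct, dotProduct_smul, hcol]
  simp

theorem PosDef.one_le_diag_mul_inv_diag (hA : A.PosDef) (i : n) : 1 ≤ A i i * A⁻¹ i i := by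
  have hform := hA.posSemidef.dotProduct_mulVec_nonneg (A i i • A⁻¹.col i - Pi.single i 1)
  rw [star_trivial, hA.isSymm.dotProduct_mulVec_inv_col_smul_sub_single
    ((isUnit_iff_isUnit_det A).mp hA.isUnit)] at hform
  nlinarith [hA.diag_pos (i := i)]

theorem PosDef.diag_mul_inv_diag_eq_one_iff (hA : A.PosDef) (i : n) :
    A i i * A⁻¹ i i = 1 ↔ ∀ j ≠ i, A i j = 0 := by
  have hdet := (isUnit_iff_isUnit_det A).mp hA.isUnit
  have hform := hA.isSymm.dotProduct_mulVec_inv_col_smul_sub_single hdet i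
  rw [← sub_eq_zero, ← (mul_eq_zero_iff_left (hA.diag_pos (i := i)).ne'), ← hform,
    hA.dotProduct_mulVec_eq_zero_iff, ← (mulVec_injective_iff_isUnit.mpr hA.isUnit).eq_iff,
    mulVec_zero, mulVec_inv_col_smul_sub_single hdet, sub_eq_zero, funext_iff]
  refine ⟨fun h j hj ↦ ?_, fun h j ↦ ?_⟩
  · simpa [hj, hA.isSymm.apply] using (h j).symm
  · rcases eq_or_ne j i with rfl | hj
    · simp
    · simp [hj, hA.isSymm.apply, h j hj]

theorem IsSymm.sum_mul_inv_eq_one (hA : A.IsSymm) (hdet : IsUnit A.det) (i : n) :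
    ∑ j, A i j * A⁻¹ i j = 1 := by
  have := congrFun (congrFun (nonsing_inv_mul A hdet) i) i
  rw [mul_apply] at this
  simpa [mul_comm, hA.apply] using this

end Matrix

theorem offdiag_inv_pairing_nonpos_general (Θ : Matrix (Fin 3) (Fin 3) ℝ)
    (hpd : Θ.PosDef) :
    Θ 0 1 * Θ⁻¹ 0 1 + Θ 0 2 * Θ⁻¹ 0 2 ≤ 0 ∧
      (Θ 0 1 * Θ⁻¹ 0 1 + Θ 0 2 * Θ⁻¹ 0 2 = 0 ↔ Θ 0 1 = 0 ∧ Θ 0 2 = 0) := by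
  have hsum := hpd.isSymm.sum_mul_inv_eq_one ((Matrix.isUnit_iff_isUnit_det Θ).mp hpd.isUnit) 0
  rw [Fin.sum_univ_three] at hsum
  have hrow : (∀ j ≠ 0, Θ 0 j = 0) ↔ Θ 0 1 = 0 ∧ Θ 0 2 = 0 := by
    simp [Fin.forall_fin_succ]
  refine ⟨by linarith [hpd.one_le_diag_mul_inv_diag 0], ?_⟩
  rw [← hrow, ← hpd.diag_mul_inv_diag_eq_one_iff 0]
  constructor <;> intro h <;> linarith

/-- For a 3×3 real symmetric positive definite matrix `Θ`,
`θ₁₂ θ^{12} + θ₁₃ θ^{13} ≤ 0`, with equality iff `θ₁₂ = θ₁₃ = 0`. -/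
theorem offdiag_inv_pairing_nonpos (Θ : Matrix (Fin 3) (Fin 3) ℝ)
    (hsymm : Θ.IsSymm) (hpd : Θ.PosDef) :
    Θ 0 1 * Θ⁻¹ 0 1 + Θ 0 2 * Θ⁻¹ 0 2 ≤ 0 ∧
      (Θ 0 1 * Θ⁻¹ 0 1 + Θ 0 2 * Θ⁻¹ 0 2 = 0 ↔ Θ 0 1 = 0 ∧ Θ 0 2 = 0) :=
  offdiag_inv_pairing_nonpos_general Θ hpd
end

section
/- Let Θ be a 3×3 real symmetric positive definite matrix with entries θ_{ij} and let s ∈ ℝ³. Then s₁²/θ_{11} = sᵀ Θ⁻¹ s if and only if there exists a constant k ∈ ℝ such that s₁ = k θ_{11}, s₂ = k θ_{12}, s₃ = k θ_{13} (i.e., s = k times the first column of Θ). -/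
open Matrix

/-!
Put `t = Θ⁻¹ s` and `u = t - (s₁ / θ₁₁) e₁`. Completing the square in the first coordinate gives
`uᵀ Θ u = sᵀ Θ⁻¹ s - s₁² / θ₁₁`, so by positive definiteness equality holds iff `u = 0`, i.e. iff
`s = Θ t` is a multiple of the first column of `Θ`.
-/

namespace Matrix

variable {n : Type*} [Fintype n]

theorem PosDef.dotProduct_mulVec_self_eq_zero_iff {A : Matrix n n ℝ} (hA : A.PosDef)
    {x : n → ℝ} : x ⬝ᵥ A *ᵥ x = 0 ↔ x = 0 := by
  refine ⟨fun h => ?_, fun h => by simp [h]⟩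
  by_contra hx
  exact (hA.dotProduct_mulVec_pos hx).ne' h

variable [DecidableEq n]

theorem IsSymm.dotProduct_mulVec_sub_single {R : Type*} [CommRing R] {A : Matrix n n R}
    (hA : A.IsSymm) (t : n → R) (i : n) (c : R) :
    (t - Pi.single i c) ⬝ᵥ A *ᵥ (t - Pi.single i c) =
      t ⬝ᵥ A *ᵥ t - 2 * c * (A *ᵥ t) i + c ^ 2 * A i i := by
  have hsymm : t ⬝ᵥ A *ᵥ Pi.single i c = c * (A *ᵥ t) i := by
    rw [dotProduct_mulVec, ← hA.eq, vecMul_transpose, dotProduct_single, hA.eq, mul_comm]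
  have hdiag : (A *ᵥ Pi.single i c) i = A i i * c := by simp [mulVec_single]
  simp only [mulVec_sub, sub_dotProduct, dotProduct_sub, single_dotProduct, hsymm, hdiag]
  ring

section Field

variable {K : Type*} [Field K] {A : Matrix n n K}

theorem inv_mulVec_eq_iff_eq_mulVec (hA : IsUnit A) {s v : n → K} :
    A⁻¹ *ᵥ s = v ↔ s = A *ᵥ v := by
  have := hA.invertible
  exact ⟨fun h => by rw [← h, mulVec_mulVec, mul_inv_of_invertible, one_mulVec],
    inv_mulVec_eq_vec⟩

theorem IsSymm.dotProduct_mulVec_sub_single_div_diag (hA : A.IsSymm) (hAu : IsUnit A) {i : n}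
    (hii : A i i ≠ 0) (s : n → K) :
    (A⁻¹ *ᵥ s - Pi.single i (s i / A i i)) ⬝ᵥ A *ᵥ (A⁻¹ *ᵥ s - Pi.single i (s i / A i i)) =
      s ⬝ᵥ A⁻¹ *ᵥ s - s i ^ 2 / A i i := by
  have hAt : A *ᵥ (A⁻¹ *ᵥ s) = s := ((inv_mulVec_eq_iff_eq_mulVec hAu).mp rfl).symm
  rw [hA.dotProduct_mulVec_sub_single, hAt, dotProduct_comm]
  field_simp
  ring

theorem inv_mulVec_eq_single_iff (hA : IsUnit A) {i : n} (hii : A i i ≠ 0) (s : n → K) :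
    A⁻¹ *ᵥ s = Pi.single i (s i / A i i) ↔ ∃ k : K, ∀ j, s j = k * A j i := by
  simp only [inv_mulVec_eq_iff_eq_mulVec hA, funext_iff, mulVec_single, Pi.smul_apply,
    col_apply, MulOpposite.smul_eq_mul_unop, MulOpposite.unop_op]
  refine ⟨fun h => ⟨_, fun j => (h j).trans (mul_comm _ _)⟩, fun ⟨k, hk⟩ j => ?_⟩
  rw [hk j, hk i, mul_div_cancel_right₀ _ hii, mul_comm]

end Field

theorem PosDef.sq_div_diag_eq_dotProduct_inv_mulVec_iff {A : Matrix n n ℝ} (hA : A.PosDef)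
    (s : n → ℝ) (i : n) :
    s i ^ 2 / A i i = s ⬝ᵥ A⁻¹ *ᵥ s ↔ ∃ k : ℝ, ∀ j, s j = k * A j i := by
  have hsymm : A.IsSymm := isHermitian_iff_isSymm.mp hA.isHermitian
  have hii : A i i ≠ 0 := hA.diag_pos.ne'
  rw [eq_comm, ← sub_eq_zero, ← hsymm.dotProduct_mulVec_sub_single_div_diag hA.isUnit hii,
    hA.dotProduct_mulVec_self_eq_zero_iff, sub_eq_zero, inv_mulVec_eq_single_iff hA.isUnit hii]

end Matrix

theorem sq_div_theta11_eq_iff_general (Θ : Matrix (Fin 3) (Fin 3) ℝ)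
    (hpd : Θ.PosDef) (s : Fin 3 → ℝ) :
    (s 0) ^ 2 / Θ 0 0 = s ⬝ᵥ (Θ⁻¹ *ᵥ s) ↔ ∃ k : ℝ, ∀ i, s i = k * Θ i 0 :=
  hpd.sq_div_diag_eq_dotProduct_inv_mulVec_iff s 0

/-- Equality `s₁²/θ₁₁ = sᵀ Θ⁻¹ s` holds iff `s` is a multiple of the first
column of `Θ`. -/
theorem sq_div_theta11_eq_iff (Θ : Matrix (Fin 3) (Fin 3) ℝ)
    (hsymm : Θ.IsSymm) (hpd : Θ.PosDef) (s : Fin 3 → ℝ) :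
    (s 0) ^ 2 / Θ 0 0 = s ⬝ᵥ (Θ⁻¹ *ᵥ s) ↔ ∃ k : ℝ, ∀ i, s i = k * Θ i 0 :=
  sq_div_theta11_eq_iff_general Θ hpd s
end

section
/- For 0 < η₂ < (425 + 125√3073)/288, the linear polynomial p̃₁(z) = 25(5z − 7) + 8η₂ and the cubic p̃₂(z) = 25(5z − 7)(5z² − 26z + 15) + 8η₂(23z² − 73z + 3) have no common root; indeed p̃₂((175 − 8η₂)/125) = 8η₂(1152η₂² − 3400η₂ − 664375)/15625 < 0. -/
lemma quadratic_factor_sqrt_3073 (x : ℝ) :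
    1152 * x ^ 2 - 3400 * x - 664375 =
      1152 * (x - (425 + 125 * √3073) / 288) * (x - (425 - 125 * √3073) / 288) := by
  linear_combination (1152 * 125 ^ 2 / 288 ^ 2 : ℝ) * Real.sq_sqrt (show (0 : ℝ) ≤ 3073 by norm_num)

lemma quadratic_neg_of_pos_of_lt {x : ℝ} (h0 : 0 < x) (h1 : x < (425 + 125 * √3073) / 288) :
    1152 * x ^ 2 - 3400 * x - 664375 < 0 := by
  have hsqrt : 425 / 125 < √3073 := Real.lt_sqrt_of_sq_lt (by norm_num)
  rw [quadratic_factor_sqrt_3073]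
  exact mul_neg_of_neg_of_pos (mul_neg_of_pos_of_neg (by norm_num) (by linarith)) (by linarith)

lemma cubic_eval_at_linear_root (η : ℝ) :
    let z₀ := (175 - 8 * η) / 125
    25 * (5 * z₀ - 7) * (5 * z₀ ^ 2 - 26 * z₀ + 15) + 8 * η * (23 * z₀ ^ 2 - 73 * z₀ + 3) =
      8 * η * (1152 * η ^ 2 - 3400 * η - 664375) / 15625 := by
  intro z₀
  ring

/-- For `0 < η₂ < (425 + 125√3073)/288`, the linear polynomial
`p̃₁(z) = 25(5z − 7) + 8η₂` and the cubic
`p̃₂(z) = 25(5z − 7)(5z² − 26z + 15) + 8η₂(23z² − 73z + 3)` have no common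
root; indeed `p̃₂((175 − 8η₂)/125) = 8η₂(1152η₂² − 3400η₂ − 664375)/15625 < 0`. -/
theorem linear_cubic_no_common_root (η₂ : ℝ) (h0 : 0 < η₂)
    (h1 : η₂ < (425 + 125 * Real.sqrt 3073) / 288) :
    (∀ z : ℝ, 25 * (5 * z - 7) + 8 * η₂ = 0 →
      25 * (5 * z - 7) * (5 * z ^ 2 - 26 * z + 15) +
        8 * η₂ * (23 * z ^ 2 - 73 * z + 3) ≠ 0) ∧
    (let z₀ := (175 - 8 * η₂) / 125
     25 * (5 * z₀ - 7) * (5 * z₀ ^ 2 - 26 * z₀ + 15) +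
        8 * η₂ * (23 * z₀ ^ 2 - 73 * z₀ + 3) =
      8 * η₂ * (1152 * η₂ ^ 2 - 3400 * η₂ - 664375) / 15625 ∧
     8 * η₂ * (1152 * η₂ ^ 2 - 3400 * η₂ - 664375) / 15625 < 0) := by
  have hval := cubic_eval_at_linear_root η₂
  have hneg : 8 * η₂ * (1152 * η₂ ^ 2 - 3400 * η₂ - 664375) / 15625 < 0 :=
    div_neg_of_neg_of_pos
      (mul_neg_of_pos_of_neg (by positivity) (quadratic_neg_of_pos_of_lt h0 h1)) (by norm_num)
  refine ⟨fun z hz => ?_, hval, hneg⟩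
  obtain rfl : z = (175 - 8 * η₂) / 125 := by linarith
  exact (hval.trans_lt hneg).ne
end
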